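/- arXiv:2111.03084 — 2 statements merged into one kernel-verified Lean document; each statement's English description precedes it below -/
import Mathlib

section
/- Let ξ₁,…,ξ_t be exchangeable {0,1}-valued random variables and let b be an integer with 1 ≤ b ≤ t. If P(ξ₁ = ξ₂ = ⋯ = ξ_b = 1) ≤ q^b for some q ∈ (0,1), then for every integer T with b ≤ T ≤ t−1, P(∑_{i=1}^t ξ_i ≥ T) ≤ C(t,b) q^b / C(T,b), where C(n,k) denotes the binomial coefficient. -/
open MeasureTheory ProbabilityTheory Finset
open scoped ENNReal

/-!
Count, for each outcome, the `b`-subsets `B` of indices with `ξ_i = 1` for all `i ∈ B`. By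
exchangeability each such event has the probability of `ξ₁ = ⋯ = ξ_b = 1`, so the expected count
is at most `C(t,b) q^b`; on the event `∑ ξ_i ≥ T` at least `T` indices carry a `1`, so the count
is at least `C(T,b)`. Markov's inequality concludes.
-/

lemma Finset.card_filter_subset_powersetCard_univ {ι : Type*} [Fintype ι] [DecidableEq ι]
    (s : Finset ι) (n : ℕ) : #{B ∈ powersetCard n univ | B ⊆ s} = (#s).choose n := by
  rw [← card_powersetCard]
  congr 1
  ext B
  simp [mem_powersetCard, and_comm]

lemma Finset.sum_eq_card_filter_eq_one {ι : Type*} [Fintype ι] {x : ι → ℝ}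
    (hx : ∀ i, x i = 0 ∨ x i = 1) : ∑ i, x i = #{i | x i = 1} := by
  rw [Finset.natCast_card_filter]
  refine sum_congr rfl fun i _ => ?_
  rcases hx i with h | h <;> simp [h]

section

variable {Ω ι β : Type*} [MeasurableSpace Ω] [MeasurableSpace β]
  [MeasurableSingletonClass β] {μ : Measure Ω} {X : ι → Ω → β}

lemma measurableSet_forall_mem_eq (hX : ∀ i, Measurable (X i)) (B : Finset ι) (a : β) :
    MeasurableSet {ω | ∀ i ∈ B, X i ω = a} := by
  simp only [Set.ofPred_forall]
  exact MeasurableSet.biInter B.countable_toSet fun i _ => hX i (measurableSet_singleton a)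

lemma measure_forall_mem_eq_of_card_eq (hX : ∀ i, Measurable (X i))
    (hexch : ∀ σ : Equiv.Perm ι,
      Measure.map (fun ω => fun i => X (σ i) ω) μ = Measure.map (fun ω => fun i => X i ω) μ)
    (a : β) {B B' : Finset ι} (hBB' : #B = #B') :
    μ {ω | ∀ i ∈ B, X i ω = a} = μ {ω | ∀ i ∈ B', X i ω = a} := by
  obtain ⟨σ, hσ⟩ := Equiv.Perm.exists_map_finset_eq B' B hBB'.symm
  have hS : MeasurableSet {x : ι → β | ∀ i ∈ B', x i = a} :=
    measurableSet_forall_mem_eq measurable_pi_apply B' a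
  have hσX : Measurable fun ω i => X (σ i) ω := measurable_pi_lambda _ fun i => hX (σ i)
  have hpre : {ω | ∀ i ∈ B, X i ω = a} = (fun ω i => X (σ i) ω) ⁻¹' {x | ∀ i ∈ B', x i = a} := by
    ext ω
    simp only [← hσ, Set.mem_ofPred_eq, Set.mem_preimage, mem_map_equiv]
    exact ⟨fun h i hi => h (σ i) (by simpa), fun h i hi => by simpa using h _ hi⟩
  rw [hpre, ← Measure.map_apply hσX hS, hexch σ,
    Measure.map_apply (measurable_pi_lambda _ hX) hS]
  rfl

lemma choose_mul_measure_le_sum_measure_forall_mem_eq [Fintype ι] [DecidableEq β]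
    (hX : ∀ i, Measurable (X i)) (a : β) (b T : ℕ) :
    (T.choose b : ℝ≥0∞) * μ {ω | T ≤ #{i | X i ω = a}}
      ≤ ∑ B ∈ powersetCard b univ, μ {ω | ∀ i ∈ B, X i ω = a} := by
  classical
  set N : Ω → ℝ≥0∞ := fun ω =>
    ∑ B ∈ powersetCard b univ, {ω | ∀ i ∈ B, X i ω = a}.indicator 1 ω
  have hN : ∀ ω, N ω = (#{i | X i ω = a}).choose b := fun ω => by
    simp only [N, Set.indicator_apply, Set.mem_ofPred_eq, Pi.one_apply, sum_boole,
      ← card_filter_subset_powersetCard_univ {i | X i ω = a} b, subset_iff, mem_filter_univ]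
  have hNmeas : Measurable N := Finset.measurable_sum _ fun B _ =>
    measurable_one.indicator (measurableSet_forall_mem_eq hX B a)
  calc (T.choose b : ℝ≥0∞) * μ {ω | T ≤ #{i | X i ω = a}}
      ≤ T.choose b * μ {ω | T.choose b ≤ N ω} := by
        gcongr with ω
        intro hω
        rw [hN]
        exact_mod_cast Nat.choose_le_choose b hω
    _ ≤ ∫⁻ ω, N ω ∂μ := mul_meas_ge_le_lintegral₀ hNmeas.aemeasurable _
    _ = ∑ B ∈ powersetCard b univ, μ {ω | ∀ i ∈ B, X i ω = a} := by
        rw [lintegral_finsetSum _ fun B _ =>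
          measurable_one.indicator (measurableSet_forall_mem_eq hX B a)]
        exact sum_congr rfl fun B _ =>
          lintegral_indicator_one (measurableSet_forall_mem_eq hX B a)

end

theorem exchangeable_markov_bound_general
    {Ω : Type*} [MeasureSpace Ω] [IsProbabilityMeasure (ℙ : Measure Ω)]
    (t b : ℕ) (hbt : b ≤ t)
    (ξ : Fin t → Ω → ℝ) (hmeas : ∀ i, Measurable (ξ i))
    (h01 : ∀ i ω, ξ i ω = 0 ∨ ξ i ω = 1)
    (hexch : ∀ σ : Equiv.Perm (Fin t),
      Measure.map (fun ω => fun i => ξ (σ i) ω) ℙ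
        = Measure.map (fun ω => fun i => ξ i ω) ℙ)
    (q : ℝ)
    (hqb : ℙ {ω | ∀ i : Fin t, (i : ℕ) < b → ξ i ω = 1} ≤ ENNReal.ofReal (q ^ b))
    (T : ℕ) (hT1 : b ≤ T) :
    ℙ {ω | (T : ℝ) ≤ ∑ i, ξ i ω}
      ≤ ENNReal.ofReal ((t.choose b : ℝ) * q ^ b / (T.choose b : ℝ)) := by
  set B₀ : Finset (Fin t) := {i | (i : ℕ) < b}
  have hB₀ : #B₀ = b := by simp [B₀, Fin.card_filter_val_lt, hbt]
  have hmeasure_le : ∀ B ∈ powersetCard b univ,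
      ℙ {ω | ∀ i ∈ B, ξ i ω = 1} ≤ ENNReal.ofReal (q ^ b) := fun B hB => by
    rw [measure_forall_mem_eq_of_card_eq hmeas hexch 1 ((mem_powersetCard.1 hB).2.trans hB₀.symm)]
    simpa [B₀] using hqb
  have hmarkov : (T.choose b : ℝ≥0∞) * ℙ {ω | (T : ℝ) ≤ ∑ i, ξ i ω}
      ≤ t.choose b * ENNReal.ofReal (q ^ b) := by
    simp only [sum_eq_card_filter_eq_one (h01 · _), Nat.cast_le]
    calc _ ≤ _ := choose_mul_measure_le_sum_measure_forall_mem_eq hmeas 1 b T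
      _ ≤ ∑ _B ∈ powersetCard b univ, ENNReal.ofReal (q ^ b) := sum_le_sum hmeasure_le
      _ = t.choose b * ENNReal.ofReal (q ^ b) := by simp
  rw [ENNReal.ofReal_div_of_pos (by exact_mod_cast Nat.choose_pos hT1),
    ENNReal.ofReal_mul (by positivity), ENNReal.ofReal_natCast, ENNReal.ofReal_natCast,
    ENNReal.le_div_iff_mul_le (by simp [(Nat.choose_pos hT1).ne']) (by simp), mul_comm]
  exact hmarkov

/-- If `ξ₁,…,ξ_t` are exchangeable `{0,1}`-valued random variables,
`1 ≤ b ≤ t`, and `P(ξ₁ = ⋯ = ξ_b = 1) ≤ q ^ b` for some `q ∈ (0,1)`, then for every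
integer `T` with `b ≤ T ≤ t − 1`,
`P(∑ ξ_i ≥ T) ≤ C(t,b) q^b / C(T,b)`. -/
theorem exchangeable_markov_bound
    {Ω : Type*} [MeasureSpace Ω] [IsProbabilityMeasure (ℙ : Measure Ω)]
    (t b : ℕ) (hb : 1 ≤ b) (hbt : b ≤ t)
    (ξ : Fin t → Ω → ℝ) (hmeas : ∀ i, Measurable (ξ i))
    (h01 : ∀ i ω, ξ i ω = 0 ∨ ξ i ω = 1)
    (hexch : ∀ σ : Equiv.Perm (Fin t),
      Measure.map (fun ω => fun i => ξ (σ i) ω) ℙ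
        = Measure.map (fun ω => fun i => ξ i ω) ℙ)
    (q : ℝ) (hq : q ∈ Set.Ioo (0 : ℝ) 1)
    (hqb : ℙ {ω | ∀ i : Fin t, (i : ℕ) < b → ξ i ω = 1} ≤ ENNReal.ofReal (q ^ b))
    (T : ℕ) (hT1 : b ≤ T) (hT2 : T ≤ t - 1) :
    ℙ {ω | (T : ℝ) ≤ ∑ i, ξ i ω}
      ≤ ENNReal.ofReal ((t.choose b : ℝ) * q ^ b / (T.choose b : ℝ)) :=
  exchangeable_markov_bound_general t b hbt ξ hmeas h01 hexch q hqb T hT1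
end

section
/- Let ξ, ψ, ξ′, ψ′ be real random variables with cdfs F_ξ, F_ψ, F_{ξ′}, F_{ψ′}, where ξ is independent of ψ and ξ′ is independent of ψ′. Suppose there exist constants a, b, c, d ≥ 0 such that F_ξ(u) ≤ a + b·F_{ξ′}(u) and F_ψ(u) ≤ c + d·F_{ψ′}(u) for all u ∈ ℝ. Then for all u ∈ ℝ, F_{ξ+ψ}(u) ≤ min{(c + a·d) + b·d·F_{ξ′+ψ′}(u), (a + b·c) + b·d·F_{ξ′+ψ′}(u)}. -/
open MeasureTheory ProbabilityTheory

lemma aux_cdf_bound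
    {Ω : Type*} [MeasureSpace Ω] [IsProbabilityMeasure (ℙ : Measure Ω)]
    (ξ ψ ξ' ψ' : Ω → ℝ)
    (hξ : Measurable ξ) (hψ : Measurable ψ) (hξ' : Measurable ξ') (hψ' : Measurable ψ')
    (hindep : IndepFun ξ ψ ℙ) (hindep' : IndepFun ξ' ψ' ℙ)
    (a b c d : ℝ)
    (hFξ : ∀ u : ℝ, ℙ {ω | ξ ω ≤ u} ≤ ENNReal.ofReal a + ENNReal.ofReal b * ℙ {ω | ξ' ω ≤ u})
    (hFψ : ∀ u : ℝ, ℙ {ω | ψ ω ≤ u} ≤ ENNReal.ofReal c + ENNReal.ofReal d * ℙ {ω | ψ' ω ≤ u})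
    (u : ℝ) :
    ℙ {ω | ξ ω + ψ ω ≤ u} ≤ ENNReal.ofReal a + ENNReal.ofReal b *
      (ENNReal.ofReal c + ENNReal.ofReal d * ℙ {ω | ξ' ω + ψ' ω ≤ u}) := by
  set μ := Measure.map ξ ℙ
  set ν := Measure.map ψ ℙ
  set μ' := Measure.map ξ' ℙ
  set ν' := Measure.map ψ' ℙ
  have hμ : IsProbabilityMeasure μ := Measure.isProbabilityMeasure_map hξ.aemeasurable
  have hν : IsProbabilityMeasure ν := Measure.isProbabilityMeasure_map hψ.aemeasurable
  have hμ' : IsProbabilityMeasure μ' := Measure.isProbabilityMeasure_map hξ'.aemeasurable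
  have hν' : IsProbabilityMeasure ν' := Measure.isProbabilityMeasure_map hψ'.aemeasurable
  have hS : MeasurableSet {p : ℝ × ℝ | p.1 + p.2 ≤ u} :=
    measurableSet_le (measurable_fst.add measurable_snd) measurable_const
  -- translate hypotheses to the pushforward measures
  have hFξ' : ∀ t : ℝ, μ (Set.Iic t) ≤ ENNReal.ofReal a + ENNReal.ofReal b * μ' (Set.Iic t) := by
    intro t
    have h1 : μ (Set.Iic t) = ℙ {ω | ξ ω ≤ t} := Measure.map_apply hξ measurableSet_Iic
    have h2 : μ' (Set.Iic t) = ℙ {ω | ξ' ω ≤ t} := Measure.map_apply hξ' measurableSet_Iic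
    rw [h1, h2]; exact hFξ t
  have hFψ' : ∀ t : ℝ, ν (Set.Iic t) ≤ ENNReal.ofReal c + ENNReal.ofReal d * ν' (Set.Iic t) := by
    intro t
    have h1 : ν (Set.Iic t) = ℙ {ω | ψ ω ≤ t} := Measure.map_apply hψ measurableSet_Iic
    have h2 : ν' (Set.Iic t) = ℙ {ω | ψ' ω ≤ t} := Measure.map_apply hψ' measurableSet_Iic
    rw [h1, h2]; exact hFψ t
  -- express sums via product measures
  have hsum : ℙ {ω | ξ ω + ψ ω ≤ u} = (μ.prod ν) {p : ℝ × ℝ | p.1 + p.2 ≤ u} := by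
    rw [← (indepFun_iff_map_prod_eq_prod_map_map hξ.aemeasurable hψ.aemeasurable).mp hindep,
      Measure.map_apply (hξ.prodMk hψ) hS]
    rfl
  have hsum' : ℙ {ω | ξ' ω + ψ' ω ≤ u} = (μ'.prod ν') {p : ℝ × ℝ | p.1 + p.2 ≤ u} := by
    rw [← (indepFun_iff_map_prod_eq_prod_map_map hξ'.aemeasurable hψ'.aemeasurable).mp hindep',
      Measure.map_apply (hξ'.prodMk hψ') hS]
    rfl
  rw [hsum, hsum']
  -- slice preimage identities
  have hpre_r : ∀ y : ℝ, ((fun x => (x, y)) ⁻¹' {p : ℝ × ℝ | p.1 + p.2 ≤ u}) = Set.Iic (u - y) := by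
    intro y; ext x; simp [Set.mem_Iic]; constructor <;> intro h <;> linarith
  have hpre_l : ∀ x : ℝ, (Prod.mk x ⁻¹' {p : ℝ × ℝ | p.1 + p.2 ≤ u}) = Set.Iic (u - x) := by
    intro x; ext y; simp [Set.mem_Iic]; constructor <;> intro h <;> linarith
  -- step 1
  calc (μ.prod ν) {p : ℝ × ℝ | p.1 + p.2 ≤ u}
      = ∫⁻ y, μ (Set.Iic (u - y)) ∂ν := by
        rw [Measure.prod_apply_symm hS]; simp_rw [hpre_r]
    _ ≤ ∫⁻ y, (ENNReal.ofReal a + ENNReal.ofReal b * μ' (Set.Iic (u - y))) ∂ν :=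
        lintegral_mono fun y => hFξ' (u - y)
    _ = ENNReal.ofReal a + ENNReal.ofReal b * ∫⁻ y, μ' (Set.Iic (u - y)) ∂ν := by
        rw [lintegral_add_left measurable_const, lintegral_const, measure_univ, mul_one,
          lintegral_const_mul]
        have := measurable_measure_prodMk_right (μ := μ') hS
        simpa [hpre_r] using this
    _ = ENNReal.ofReal a + ENNReal.ofReal b * (μ'.prod ν) {p : ℝ × ℝ | p.1 + p.2 ≤ u} := by
        rw [Measure.prod_apply_symm hS]; simp_rw [hpre_r]
    _ = ENNReal.ofReal a + ENNReal.ofReal b * ∫⁻ x, ν (Set.Iic (u - x)) ∂μ' := by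
        rw [Measure.prod_apply hS]; simp_rw [hpre_l]
    _ ≤ ENNReal.ofReal a + ENNReal.ofReal b *
          ∫⁻ x, (ENNReal.ofReal c + ENNReal.ofReal d * ν' (Set.Iic (u - x))) ∂μ' := by
        gcongr with x
        exact hFψ' (u - x)
    _ = ENNReal.ofReal a + ENNReal.ofReal b *
          (ENNReal.ofReal c + ENNReal.ofReal d * ∫⁻ x, ν' (Set.Iic (u - x)) ∂μ') := by
        rw [lintegral_add_left measurable_const, lintegral_const, measure_univ, mul_one,
          lintegral_const_mul]
        have := measurable_measure_prodMk_left (ν := ν') hS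
        simpa [hpre_l] using this
    _ = ENNReal.ofReal a + ENNReal.ofReal b *
          (ENNReal.ofReal c + ENNReal.ofReal d * (μ'.prod ν') {p : ℝ × ℝ | p.1 + p.2 ≤ u}) := by
        rw [Measure.prod_apply hS]; simp_rw [hpre_l]

/-- If `F_ξ ≤ a + b·F_{ξ'}` and `F_ψ ≤ c + d·F_{ψ'}` pointwise,
with `ξ ⟂ ψ` and `ξ' ⟂ ψ'` independent pairs, then
`F_{ξ+ψ}(u) ≤ min{(c + a·d) + b·d·F_{ξ'+ψ'}(u), (a + b·c) + b·d·F_{ξ'+ψ'}(u)}`. -/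
theorem cdf_sum_combination_bound
    {Ω : Type*} [MeasureSpace Ω] [IsProbabilityMeasure (ℙ : Measure Ω)]
    (ξ ψ ξ' ψ' : Ω → ℝ)
    (hξ : Measurable ξ) (hψ : Measurable ψ) (hξ' : Measurable ξ') (hψ' : Measurable ψ')
    (hindep : IndepFun ξ ψ ℙ) (hindep' : IndepFun ξ' ψ' ℙ)
    (a b c d : ℝ) (ha : 0 ≤ a) (hb : 0 ≤ b) (hc : 0 ≤ c) (hd : 0 ≤ d)
    (hFξ : ∀ u : ℝ, (ℙ {ω | ξ ω ≤ u}).toReal ≤ a + b * (ℙ {ω | ξ' ω ≤ u}).toReal)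
    (hFψ : ∀ u : ℝ, (ℙ {ω | ψ ω ≤ u}).toReal ≤ c + d * (ℙ {ω | ψ' ω ≤ u}).toReal) :
    ∀ u : ℝ, (ℙ {ω | ξ ω + ψ ω ≤ u}).toReal ≤
      min ((c + a * d) + b * d * (ℙ {ω | ξ' ω + ψ' ω ≤ u}).toReal)
          ((a + b * c) + b * d * (ℙ {ω | ξ' ω + ψ' ω ≤ u}).toReal) := by
  intro u
  -- convert real hypotheses to ENNReal
  have conv : ∀ (f f' : Ω → ℝ) (p q : ℝ), 0 ≤ p → 0 ≤ q →
      (∀ t : ℝ, (ℙ {ω | f ω ≤ t}).toReal ≤ p + q * (ℙ {ω | f' ω ≤ t}).toReal) →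
      ∀ t : ℝ, ℙ {ω | f ω ≤ t} ≤ ENNReal.ofReal p + ENNReal.ofReal q * ℙ {ω | f' ω ≤ t} := by
    intro f f' p q hp hq h t
    have h1 : ℙ {ω | f ω ≤ t} ≠ ⊤ := measure_ne_top _ _
    have h2 : ℙ {ω | f' ω ≤ t} ≠ ⊤ := measure_ne_top _ _
    calc ℙ {ω | f ω ≤ t} = ENNReal.ofReal (ℙ {ω | f ω ≤ t}).toReal := (ENNReal.ofReal_toReal h1).symm
      _ ≤ ENNReal.ofReal (p + q * (ℙ {ω | f' ω ≤ t}).toReal) := ENNReal.ofReal_le_ofReal (h t)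
      _ ≤ ENNReal.ofReal p + ENNReal.ofReal q * ℙ {ω | f' ω ≤ t} := by
          rw [ENNReal.ofReal_add hp (by positivity)]
          gcongr
          rw [ENNReal.ofReal_mul hq, ENNReal.ofReal_toReal h2]
  have hFξE := conv ξ ξ' a b ha hb hFξ
  have hFψE := conv ψ ψ' c d hc hd hFψ
  have key1 := aux_cdf_bound ξ ψ ξ' ψ' hξ hψ hξ' hψ' hindep hindep' a b c d hFξE hFψE u
  have key2 := aux_cdf_bound ψ ξ ψ' ξ' hψ hξ hψ' hξ' hindep.symm hindep'.symm c d a b hFψE hFξE u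
  have hcomm : {ω | ψ ω + ξ ω ≤ u} = {ω | ξ ω + ψ ω ≤ u} := by ext ω; simp [add_comm]
  have hcomm' : {ω | ψ' ω + ξ' ω ≤ u} = {ω | ξ' ω + ψ' ω ≤ u} := by ext ω; simp [add_comm]
  rw [hcomm, hcomm'] at key2
  set P := ℙ {ω | ξ ω + ψ ω ≤ u}
  set P' := ℙ {ω | ξ' ω + ψ' ω ≤ u}
  have hP : P ≠ ⊤ := measure_ne_top _ _
  have hP' : P' ≠ ⊤ := measure_ne_top _ _
  have hP'0 : 0 ≤ P'.toReal := ENNReal.toReal_nonneg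
  refine le_min ?_ ?_
  · have := ENNReal.toReal_mono (by finiteness) key2
    rw [ENNReal.toReal_add (by finiteness) (by finiteness), ENNReal.toReal_mul,
      ENNReal.toReal_add (by finiteness) (by finiteness), ENNReal.toReal_mul,
      ENNReal.toReal_ofReal hc, ENNReal.toReal_ofReal hd, ENNReal.toReal_ofReal ha,
      ENNReal.toReal_ofReal hb] at this
    nlinarith [this]
  · have := ENNReal.toReal_mono (by finiteness) key1
    rw [ENNReal.toReal_add (by finiteness) (by finiteness), ENNReal.toReal_mul,
      ENNReal.toReal_add (by finiteness) (by finiteness), ENNReal.toReal_mul,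
      ENNReal.toReal_ofReal ha, ENNReal.toReal_ofReal hb, ENNReal.toReal_ofReal hc,
      ENNReal.toReal_ofReal hd] at this
    nlinarith [this]
end
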